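/- arXiv:math/0512601 — 2 statements merged into one kernel-verified Lean document; each statement's English description precedes it below -/
import Mathlib

section
/- Bias bound for kernel smoothing in Sobolev balls: let m ∈ L²(ℝ) have Fourier transform m*, and suppose m belongs to the Sobolev space W(β), i.e. ∫ (1+|ν|)^{2β} |m*(ν)|² dν < ∞. Let K be a kernel whose Fourier transform K* satisfies |1 − K*(ν)| ≤ C_K |ν|^l/(1+|ν|)^l for all ν with l ≥ β. Then for any h ∈ (0,1], the function b₁ defined via its Fourier transform b₁*(ν) = (1 − K*(hν)) m*(ν) satisfies ‖b₁‖₂² ≤ C_K² h^{2β} ‖m‖²_{W(β)}. -/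
open MeasureTheory

/-- Bias bound for kernel smoothing in Sobolev balls, stated in the Fourier domain
(via Parseval, `‖b₁‖₂²` equals the integral of `|1−K*(hν)|²|m*(ν)|²`):
if `m ∈ W(β)` and `|1 − K*(ν)| ≤ C_K |ν|^l/(1+|ν|)^l` with `l ≥ β`, then for `h ∈ (0,1]`,
`‖b₁‖₂² ≤ C_K² h^{2β} ‖m‖²_{W(β)}`. -/
theorem bias_bound_sobolev
    (mstar : ℝ → ℂ) (beta : ℝ) (hbeta : 0 < beta)
    (hSobolev : Integrable (fun ν : ℝ => (1 + |ν|) ^ (2 * beta) * ‖mstar ν‖ ^ 2))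
    (Kstar : ℝ → ℂ) (CK l : ℝ) (hCK : 0 < CK) (hl : beta ≤ l)
    (hKstar : ∀ ν : ℝ, ‖1 - Kstar ν‖ ≤ CK * |ν| ^ l / (1 + |ν|) ^ l)
    (h : ℝ) (hh0 : 0 < h) (hh1 : h ≤ 1) :
    (∫ ν : ℝ, ‖(1 - Kstar (h * ν)) * mstar ν‖ ^ 2)
      ≤ CK ^ 2 * h ^ (2 * beta) *
        ∫ ν : ℝ, (1 + |ν|) ^ (2 * beta) * ‖mstar ν‖ ^ 2 := by
  have hl0 : 0 < l := lt_of_lt_of_le hbeta hl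
  have key : ∀ ν : ℝ, ‖(1 - Kstar (h * ν)) * mstar ν‖ ^ 2
      ≤ CK ^ 2 * h ^ (2 * beta) * ((1 + |ν|) ^ (2 * beta) * ‖mstar ν‖ ^ 2) := by
    intro ν
    set t : ℝ := h * |ν| with ht
    have ht0 : 0 ≤ t := mul_nonneg hh0.le (abs_nonneg ν)
    have habs : |h * ν| = t := by rw [abs_mul, abs_of_pos hh0]
    have hd0 : (0:ℝ) < 1 + t := by linarith
    -- bound the kernel factor
    have hb : ‖1 - Kstar (h * ν)‖ ≤ CK * (h * (1 + |ν|)) ^ beta := by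
      have h1 := hKstar (h * ν)
      rw [habs] at h1
      have hfrac : t / (1 + t) ≤ h * (1 + |ν|) := by
        have : t / (1 + t) ≤ t := by
          rw [div_le_iff₀ hd0]
          nlinarith
        have h2 : t ≤ h * (1 + |ν|) := by
          rw [ht]; nlinarith [hh0.le, abs_nonneg ν]
        linarith
      have hfrac1 : t / (1 + t) ≤ 1 := by
        rw [div_le_one hd0]; linarith
      have hratio : CK * t ^ l / (1 + t) ^ l ≤ CK * (h * (1 + |ν|)) ^ beta := by
        rw [mul_div_assoc, ← Real.div_rpow ht0 hd0.le]
        have hstep : (t / (1 + t)) ^ l ≤ (h * (1 + |ν|)) ^ beta := by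
          rcases eq_or_lt_of_le (div_nonneg ht0 hd0.le) with h0 | h0
          · rw [← h0, Real.zero_rpow hl0.ne']
            positivity
          · calc (t / (1 + t)) ^ l ≤ (t / (1 + t)) ^ beta :=
                  Real.rpow_le_rpow_of_exponent_ge h0 hfrac1 hl
              _ ≤ (h * (1 + |ν|)) ^ beta :=
                  Real.rpow_le_rpow (div_nonneg ht0 hd0.le) hfrac hbeta.le
        exact mul_le_mul_of_nonneg_left hstep hCK.le
      exact h1.trans hratio
    have hbn : (0:ℝ) ≤ CK * (h * (1 + |ν|)) ^ beta := by positivity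
    have hsq : ‖(1 - Kstar (h * ν)) * mstar ν‖ ^ 2
        ≤ (CK * (h * (1 + |ν|)) ^ beta) ^ 2 * ‖mstar ν‖ ^ 2 := by
      rw [norm_mul, mul_pow]
      exact mul_le_mul_of_nonneg_right (pow_le_pow_left₀ (norm_nonneg _) hb 2)
        (sq_nonneg _)
    refine hsq.trans (le_of_eq ?_)
    have hx0 : (0:ℝ) ≤ 1 + |ν| := by positivity
    have : ((h * (1 + |ν|)) ^ beta) ^ 2 = h ^ (2 * beta) * (1 + |ν|) ^ (2 * beta) := by
      rw [← Real.rpow_natCast ((h * (1 + |ν|)) ^ beta) 2, ← Real.rpow_mul (by positivity),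
        Real.mul_rpow hh0.le hx0]
      norm_num [mul_comm]
    rw [mul_pow, this]; ring
  have hnonneg : 0 ≤ᵐ[volume] fun ν : ℝ => ‖(1 - Kstar (h * ν)) * mstar ν‖ ^ 2 :=
    Filter.Eventually.of_forall fun ν => by positivity
  have hInt : Integrable (fun ν : ℝ =>
      CK ^ 2 * h ^ (2 * beta) * ((1 + |ν|) ^ (2 * beta) * ‖mstar ν‖ ^ 2)) :=
    hSobolev.const_mul _
  calc (∫ ν : ℝ, ‖(1 - Kstar (h * ν)) * mstar ν‖ ^ 2)
      ≤ ∫ ν : ℝ, CK ^ 2 * h ^ (2 * beta) * ((1 + |ν|) ^ (2 * beta) * ‖mstar ν‖ ^ 2) :=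
        integral_mono_of_nonneg hnonneg hInt (Filter.Eventually.of_forall key)
    _ = CK ^ 2 * h ^ (2 * beta) * ∫ ν : ℝ, (1 + |ν|) ^ (2 * beta) * ‖mstar ν‖ ^ 2 :=
        integral_const_mul _ _
end

section
/- Uniform differentiability bound for the resolvent-type integral: let c > 0 and η₀ > 0. For measurable complex functions z₁, z₂ on ℝ with sup|zᵢ| ≤ 1, define Ψ_z(λ̃, ω) = z₁(ω) / [(c + iω + λ̃)(c + iω + λ̃ − λ̃ z₂(ω))]. Then (i) λ̃ ↦ ∫_{-∞}^{∞} Ψ_z(λ̃, ω) dω is continuously differentiable on [0, η₀] with derivative bounded by a constant depending only on c and η₀ (not on z); and (ii) there is K > 0 depending only on c and η₀ such that for any other pair z̃ with sup|z̃ᵢ| ≤ 1 and any W ≥ 1, sup_{λ̃∈[0,η₀]} |∫ Ψ_z(λ̃,ω)dω − ∫ Ψ_{z̃}(λ̃,ω)dω| ≤ K ( max_{i=1,2} sup_{|ω|≤W} |zᵢ(ω) − z̃ᵢ(ω)| + 1/W ). -/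
/-!
For `0 ≤ λ ≤ η₀` and `‖z‖ ≤ 1`, both factors `e = c + iω + λ` and `e - λz` of the denominator are
bounded below by a fixed multiple of `‖c + iω‖ = √(c² + ω²)`: the second because
`‖e - λz‖ ≥ ‖e‖ - |λ| ≥ (1 - |λ| / Re e) ‖e‖`. Hence the integrand, its `λ`-derivative and the
difference of two integrands are dominated by multiples of the integrable weight `(c² + ω²)⁻¹`,
which gives differentiation under the integral sign and continuity of the derivative.
For the stability estimate the difference of the integrands is at most a multiple of
`M (c² + ω²)⁻¹` on `[-W, W]` and, outside, of `(W² + ω²)⁻¹`, whose integral is `π / W`.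
-/

open MeasureTheory Complex Set Filter Topology
open scoped Real

noncomputable def resolventTerm (s : ℂ) (l : ℝ) (a b : ℂ) : ℂ :=
  a / ((s + l) * (s + l - l * b))

noncomputable def resolventTermDeriv (s : ℂ) (l : ℝ) (a b : ℂ) : ℂ :=
  -(a / ((s + l) ^ 2 * (s + l - l * b))) - a * (1 - b) / ((s + l) * (s + l - l * b) ^ 2)

section Pointwise

variable {s a b : ℂ} {l r : ℝ}

theorem hasDerivAt_resolventTerm (he : s + l ≠ 0) (hd : s + l - l * b ≠ 0) :
    HasDerivAt (fun l : ℝ => resolventTerm s l a b) (resolventTermDeriv s l a b) l := by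
  have hl : HasDerivAt (fun l : ℝ => (l : ℂ)) 1 l := (hasDerivAt_id l).ofReal_comp
  have he' : HasDerivAt (fun l : ℝ => s + l) 1 l := hl.const_add s
  have hd' : HasDerivAt (fun l : ℝ => s + l - l * b) (1 - b) l := by
    simpa using he'.fun_sub (hl.mul_const b)
  have hden := he'.fun_mul hd'
  refine ((hasDerivAt_const l a).fun_div hden (mul_ne_zero he hd)).congr_deriv ?_
  rw [resolventTermDeriv]
  field_simp
  ring

theorem norm_resolventTerm_le (hr : 0 < r) (he : r ≤ ‖s + l‖) (hd : r ≤ ‖s + l - l * b‖)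
    (ha : ‖a‖ ≤ 1) : ‖resolventTerm s l a b‖ ≤ (r ^ 2)⁻¹ := by
  rw [resolventTerm, norm_div, norm_mul, ← one_div, sq]
  gcongr

theorem norm_resolventTermDeriv_le (hr : 0 < r) (he : r ≤ ‖s + l‖) (hd : r ≤ ‖s + l - l * b‖)
    (ha : ‖a‖ ≤ 1) (hb : ‖b‖ ≤ 1) : ‖resolventTermDeriv s l a b‖ ≤ 3 * (r ^ 3)⁻¹ := by
  have hb' : ‖1 - b‖ ≤ 2 := (norm_sub_le _ _).trans (by rw [norm_one]; linarith)
  rw [resolventTermDeriv]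
  refine (norm_sub_le _ _).trans ?_
  rw [norm_neg, norm_div, norm_div, norm_mul, norm_mul, norm_mul, norm_pow, norm_pow]
  have h1 : ‖a‖ / (‖s + l‖ ^ 2 * ‖s + l - l * b‖) ≤ 1 / (r ^ 2 * r) := by gcongr
  have h2 : ‖a‖ * ‖1 - b‖ / (‖s + l‖ * ‖s + l - l * b‖ ^ 2) ≤ 1 * 2 / (r * r ^ 2) := by gcongr
  calc _ ≤ 1 / (r ^ 2 * r) + 1 * 2 / (r * r ^ 2) := add_le_add h1 h2
    _ = 3 * (r ^ 3)⁻¹ := by field_simp; ring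

theorem norm_resolventTerm_sub_le {a' b' : ℂ} (hr : 0 < r) (he : r ≤ ‖s + l‖)
    (hd : r ≤ ‖s + l - l * b‖) (hd' : r ≤ ‖s + l - l * b'‖) (ha' : ‖a'‖ ≤ 1) :
    ‖resolventTerm s l a b - resolventTerm s l a' b'‖ ≤
      ‖a - a'‖ * (r ^ 2)⁻¹ + |l| * ‖b - b'‖ * (r ^ 3)⁻¹ := by
  have hne : ∀ x : ℂ, r ≤ ‖x‖ → x ≠ 0 := fun x hx h0 => by
    rw [h0, norm_zero] at hx; linarith
  have hsplit : resolventTerm s l a b - resolventTerm s l a' b' =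
      (a - a') / ((s + l) * (s + l - l * b)) +
        a' * (l * (b - b')) / ((s + l) * (s + l - l * b) * (s + l - l * b')) := by
    rw [resolventTerm, resolventTerm]
    field_simp [hne _ he, hne _ hd, hne _ hd']
    ring
  rw [hsplit]
  refine (norm_add_le _ _).trans (add_le_add ?_ ?_)
  · rw [norm_div, norm_mul, div_eq_mul_inv, sq]
    gcongr
  · rw [norm_div, norm_mul, norm_mul, norm_mul, norm_mul, norm_real, Real.norm_eq_abs,
      div_eq_mul_inv]
    calc _ ≤ 1 * (|l| * ‖b - b'‖) * (r * r * r)⁻¹ := by gcongr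
      _ = |l| * ‖b - b'‖ * (r ^ 3)⁻¹ := by ring

end Pointwise

theorem mul_norm_le_norm_sub_ofReal_mul {e b : ℂ} (he : 0 < e.re) (t : ℝ) (hb : ‖b‖ ≤ 1) :
    (1 - |t| / e.re) * ‖e‖ ≤ ‖e - t * b‖ := by
  have htb : ‖(t : ℂ) * b‖ ≤ |t| := by
    rw [norm_mul, norm_real, Real.norm_eq_abs]
    exact mul_le_of_le_one_right (abs_nonneg t) hb
  have hte : |t| ≤ |t| / e.re * ‖e‖ := by
    rw [div_mul_eq_mul_div, le_div_iff₀ he]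
    exact mul_le_mul_of_nonneg_left (re_le_norm e) (abs_nonneg t)
  linarith [norm_sub_norm_le e (t * b)]

theorem mul_norm_le_norm_add_ofReal {s : ℂ} {l κ : ℝ} (hs : 0 ≤ s.re) (hκ : 0 ≤ κ) (hκ1 : κ ≤ 1)
    (h : κ * s.re ≤ s.re + l) : κ * ‖s‖ ≤ ‖s + l‖ := by
  rw [← sq_le_sq₀ (by positivity) (norm_nonneg _), mul_pow, Complex.sq_norm, Complex.sq_norm,
    normSq_apply, normSq_apply]
  simp only [add_re, ofReal_re, add_im, ofReal_im, add_zero]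
  have hre : (κ * s.re) ^ 2 ≤ (s.re + l) ^ 2 := pow_le_pow_left₀ (by positivity) h 2
  have hκ2 : κ ^ 2 ≤ 1 := pow_le_one₀ hκ hκ1
  nlinarith [sq_nonneg s.im]

theorem sq_norm_ofReal_add_mul_I (c ω : ℝ) : ‖(c : ℂ) + ω * I‖ ^ 2 = c ^ 2 + ω ^ 2 := by
  rw [Complex.sq_norm, normSq_add_mul_I]

theorem le_norm_ofReal_add_mul_I (c ω : ℝ) : c ≤ ‖(c : ℂ) + ω * I‖ := by
  simpa using re_le_norm ((c : ℂ) + ω * I)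

theorem inv_mul_norm_pow_three_le {c m ω : ℝ} (hc : 0 < c) (hm : 0 < m) :
    ((m * ‖(c : ℂ) + ω * I‖) ^ 3)⁻¹ ≤ (m ^ 3 * c)⁻¹ * (c ^ 2 + ω ^ 2)⁻¹ := by
  have hρ := le_norm_ofReal_add_mul_I c ω
  have hρ0 : 0 < ‖(c : ℂ) + ω * I‖ := hc.trans_le hρ
  rw [← mul_inv, ← sq_norm_ofReal_add_mul_I]
  refine inv_anti₀ (by positivity) ?_
  calc m ^ 3 * c * ‖(c : ℂ) + ω * I‖ ^ 2 ≤ m ^ 3 * ‖(c : ℂ) + ω * I‖ * ‖(c : ℂ) + ω * I‖ ^ 2 := by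
        gcongr
    _ = (m * ‖(c : ℂ) + ω * I‖) ^ 3 := by ring

/-- The factor `3/4 · c / (2(2c + η))`: for `-c/4 < λ < η + c` one has
`‖c + iω + λ‖ ≥ (3/4) ‖c + iω‖` and `1 - |λ| / (c + λ) ≥ c / (2(2c + η))`. -/
noncomputable def denomConst (c η : ℝ) : ℝ := 3 * c / (8 * (2 * c + η))

section Uniform

variable {c η l ω : ℝ} {a b : ℂ}

theorem denomConst_pos (hc : 0 < c) (hη : 0 ≤ η) : 0 < denomConst c η := by
  unfold denomConst; positivity

theorem denomConst_mul_norm_pos (hc : 0 < c) (hη : 0 ≤ η) :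
    0 < denomConst c η * ‖(c : ℂ) + ω * I‖ :=
  mul_pos (denomConst_pos hc hη) (hc.trans_le (le_norm_ofReal_add_mul_I c ω))

theorem denomConst_mul_norm_le (hc : 0 < c) (hη : 0 ≤ η)
    (hl : l ∈ Ioo (-(c / 4)) (η + c)) (hb : ‖b‖ ≤ 1) :
    denomConst c η * ‖(c : ℂ) + ω * I‖ ≤ ‖(c : ℂ) + ω * I + l - l * b‖ := by
  obtain ⟨hl₁, hl₂⟩ := hl
  have hre : ((c : ℂ) + ω * I + l).re = c + l := by simp
  have hs : 3 / 4 * ‖(c : ℂ) + ω * I‖ ≤ ‖(c : ℂ) + ω * I + l‖ :=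
    mul_norm_le_norm_add_ofReal (by simp [hc.le]) (by norm_num) (by norm_num) (by simp; linarith)
  have hd := mul_norm_le_norm_sub_ofReal_mul (hre ▸ (by linarith : 0 < c + l)) l hb
  rw [hre] at hd
  have hfactor : c / (2 * (2 * c + η)) ≤ 1 - |l| / (c + l) := by
    rw [one_sub_div (by linarith), div_le_div_iff₀ (by positivity) (by linarith)]
    rcases abs_cases l with ⟨h, _⟩ | ⟨h, _⟩ <;> rw [h] <;> nlinarith
  calc denomConst c η * ‖(c : ℂ) + ω * I‖
      = c / (2 * (2 * c + η)) * (3 / 4 * ‖(c : ℂ) + ω * I‖) := by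
        unfold denomConst; field_simp; ring
    _ ≤ (1 - |l| / (c + l)) * ‖(c : ℂ) + ω * I + l‖ :=
      mul_le_mul hfactor hs (by positivity) ((by positivity : (0:ℝ) ≤ _).trans hfactor)
    _ ≤ _ := hd

theorem denomConst_mul_norm_le_norm_add (hc : 0 < c) (hη : 0 ≤ η)
    (hl : l ∈ Ioo (-(c / 4)) (η + c)) :
    denomConst c η * ‖(c : ℂ) + ω * I‖ ≤ ‖(c : ℂ) + ω * I + l‖ := by
  simpa using denomConst_mul_norm_le (ω := ω) hc hη hl (b := 0) (by simp)

theorem resolvent_denominators_ne_zero (hc : 0 < c) (hη : 0 ≤ η)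
    (hl : l ∈ Ioo (-(c / 4)) (η + c)) (hb : ‖b‖ ≤ 1) :
    (c : ℂ) + ω * I + l ≠ 0 ∧ (c : ℂ) + ω * I + l - l * b ≠ 0 :=
  ⟨norm_pos_iff.mp
    ((denomConst_mul_norm_pos hc hη).trans_le (denomConst_mul_norm_le_norm_add hc hη hl)),
  norm_pos_iff.mp
    ((denomConst_mul_norm_pos hc hη).trans_le (denomConst_mul_norm_le hc hη hl hb))⟩

theorem norm_resolventTerm_le_uniform (hc : 0 < c) (hη : 0 ≤ η)
    (hl : l ∈ Ioo (-(c / 4)) (η + c)) (ha : ‖a‖ ≤ 1) (hb : ‖b‖ ≤ 1) :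
    ‖resolventTerm (c + ω * I) l a b‖ ≤ (denomConst c η ^ 2)⁻¹ * (c ^ 2 + ω ^ 2)⁻¹ := by
  have h := norm_resolventTerm_le (denomConst_mul_norm_pos (ω := ω) hc hη)
    (denomConst_mul_norm_le_norm_add hc hη hl) (denomConst_mul_norm_le hc hη hl hb) ha
  rwa [mul_pow, sq_norm_ofReal_add_mul_I, mul_inv] at h

theorem norm_resolventTermDeriv_le_uniform (hc : 0 < c) (hη : 0 ≤ η)
    (hl : l ∈ Ioo (-(c / 4)) (η + c)) (ha : ‖a‖ ≤ 1) (hb : ‖b‖ ≤ 1) :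
    ‖resolventTermDeriv (c + ω * I) l a b‖ ≤
      3 * (denomConst c η ^ 3 * c)⁻¹ * (c ^ 2 + ω ^ 2)⁻¹ := by
  have h := norm_resolventTermDeriv_le (denomConst_mul_norm_pos (ω := ω) hc hη)
    (denomConst_mul_norm_le_norm_add hc hη hl) (denomConst_mul_norm_le hc hη hl hb) ha hb
  rw [mul_assoc]
  exact h.trans (by gcongr; exact inv_mul_norm_pow_three_le hc (denomConst_pos hc hη))

theorem norm_resolventTerm_sub_le_uniform {a' b' : ℂ} (hc : 0 < c) (hη : 0 ≤ η)
    (hl : l ∈ Icc 0 η) (ha' : ‖a'‖ ≤ 1) (hb : ‖b‖ ≤ 1) (hb' : ‖b'‖ ≤ 1) :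
    ‖resolventTerm (c + ω * I) l a b - resolventTerm (c + ω * I) l a' b'‖ ≤
      ((denomConst c η ^ 2)⁻¹ + η * (denomConst c η ^ 3 * c)⁻¹) *
        ((‖a - a'‖ + ‖b - b'‖) * (c ^ 2 + ω ^ 2)⁻¹) := by
  have hl' : l ∈ Ioo (-(c / 4)) (η + c) := Icc_subset_Ioo (by linarith) (by linarith) hl
  have h := norm_resolventTerm_sub_le (a := a) (denomConst_mul_norm_pos (ω := ω) hc hη)
    (denomConst_mul_norm_le_norm_add hc hη hl') (denomConst_mul_norm_le hc hη hl' hb)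
    (denomConst_mul_norm_le hc hη hl' hb') ha'
  rw [mul_pow, sq_norm_ofReal_add_mul_I, mul_inv, abs_of_nonneg hl.1] at h
  have h3 := inv_mul_norm_pow_three_le (ω := ω) hc (denomConst_pos hc hη)
  set A := (denomConst c η ^ 2)⁻¹
  set B := (denomConst c η ^ 3 * c)⁻¹
  set g := (c ^ 2 + ω ^ 2)⁻¹
  have hm := denomConst_pos hc hη
  have hlb : l * ‖b - b'‖ * ((denomConst c η * ‖(c : ℂ) + ω * I‖) ^ 3)⁻¹ ≤
      η * ‖b - b'‖ * (B * g) :=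
    mul_le_mul (mul_le_mul_of_nonneg_right hl.2 (norm_nonneg _)) h3 (by positivity)
      (mul_nonneg hη (norm_nonneg _))
  have hA : 0 ≤ A * ‖b - b'‖ * g := by positivity
  have hB : 0 ≤ η * B * ‖a - a'‖ * g := by positivity
  calc _ ≤ ‖a - a'‖ * (A * g) + η * ‖b - b'‖ * (B * g) := by linarith
    _ ≤ (A + η * B) * ((‖a - a'‖ + ‖b - b'‖) * g) := by nlinarith

end Uniform

theorem integrable_inv_sq_add_sq {c : ℝ} (hc : c ≠ 0) :
    Integrable fun ω : ℝ => (c ^ 2 + ω ^ 2)⁻¹ := by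
  refine ((integrable_inv_one_add_sq.comp_div hc).const_mul (c ^ 2)⁻¹).congr
    (ae_of_all _ fun ω => ?_)
  field_simp

theorem integral_univ_inv_sq_add_sq {c : ℝ} (hc : 0 < c) : ∫ ω : ℝ, (c ^ 2 + ω ^ 2)⁻¹ = π / c := by
  calc ∫ ω : ℝ, (c ^ 2 + ω ^ 2)⁻¹ = ∫ ω : ℝ, (c ^ 2)⁻¹ * (1 + (ω / c) ^ 2)⁻¹ := by
        congr 1 with ω; field_simp
    _ = π / c := by
        rw [integral_const_mul, Measure.integral_comp_div (fun x => (1 + x ^ 2)⁻¹),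
          integral_univ_inv_one_add_sq, abs_of_pos hc, smul_eq_mul]
        field_simp

theorem inv_sq_add_sq_le {c W ω : ℝ} (hW : 0 < W) (hω : W ≤ |ω|) :
    (c ^ 2 + ω ^ 2)⁻¹ ≤ 2 * (W ^ 2 + ω ^ 2)⁻¹ := by
  have hWω : W ^ 2 ≤ ω ^ 2 := by simpa using pow_le_pow_left₀ hW.le hω 2
  calc (c ^ 2 + ω ^ 2)⁻¹ = 2 * (2 * (c ^ 2 + ω ^ 2))⁻¹ := by field_simp
    _ ≤ 2 * (W ^ 2 + ω ^ 2)⁻¹ := by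
      gcongr
      nlinarith [sq_nonneg c]

theorem add_mul_inv_sq_add_sq_le {x y M W c ω : ℝ} (hW : 0 < W) (hM : 0 ≤ M) (hx : x ≤ 2)
    (hy : y ≤ 2) (hwin : ω ∈ Icc (-W) W → x ≤ M ∧ y ≤ M) :
    (x + y) * (c ^ 2 + ω ^ 2)⁻¹ ≤ 2 * M * (c ^ 2 + ω ^ 2)⁻¹ + 8 * (W ^ 2 + ω ^ 2)⁻¹ := by
  have hg : 0 ≤ (c ^ 2 + ω ^ 2)⁻¹ := by positivity
  have hh : 0 ≤ (W ^ 2 + ω ^ 2)⁻¹ := by positivity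
  by_cases hω : ω ∈ Icc (-W) W
  · obtain ⟨hxM, hyM⟩ := hwin hω
    nlinarith
  · have hWω : W ≤ |ω| := by
      rw [mem_Icc, ← abs_le, not_le] at hω
      exact hω.le
    nlinarith [inv_sq_add_sq_le (c := c) hW hWω]

theorem norm_sub_le_iSup {α E : Type*} [SeminormedAddCommGroup E] {S : Set α} {f g : α → E}
    (hf : ∀ x, ‖f x‖ ≤ 1) (hg : ∀ x, ‖g x‖ ≤ 1) {x : α} (hx : x ∈ S) :
    ‖f x - g x‖ ≤ ⨆ y : S, ‖f y - g y‖ :=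
  le_ciSup (f := fun y : S => ‖f y - g y‖)
    ⟨2, by rintro _ ⟨y, rfl⟩; exact (norm_sub_le_of_le (hf y) (hg y)).trans_eq one_add_one_eq_two⟩
    ⟨x, hx⟩

section Integral

variable {c η l : ℝ} {z₁ z₂ : ℝ → ℂ}

theorem measurable_resolventTerm (hz₁ : Measurable z₁) (hz₂ : Measurable z₂) (c l : ℝ) :
    Measurable fun ω : ℝ => resolventTerm (c + ω * I) l (z₁ ω) (z₂ ω) := by
  unfold resolventTerm; fun_prop

theorem measurable_resolventTermDeriv (hz₁ : Measurable z₁) (hz₂ : Measurable z₂) (c l : ℝ) :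
    Measurable fun ω : ℝ => resolventTermDeriv (c + ω * I) l (z₁ ω) (z₂ ω) := by
  unfold resolventTermDeriv; fun_prop

theorem integrable_resolventTerm (hc : 0 < c) (hη : 0 ≤ η) (hz₁ : Measurable z₁)
    (hz₂ : Measurable z₂) (hb₁ : ∀ ω, ‖z₁ ω‖ ≤ 1) (hb₂ : ∀ ω, ‖z₂ ω‖ ≤ 1)
    (hl : l ∈ Ioo (-(c / 4)) (η + c)) :
    Integrable fun ω : ℝ => resolventTerm (c + ω * I) l (z₁ ω) (z₂ ω) :=
  ((integrable_inv_sq_add_sq hc.ne').const_mul _).mono'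
    (measurable_resolventTerm hz₁ hz₂ c l).aestronglyMeasurable
    (ae_of_all _ fun _ => norm_resolventTerm_le_uniform hc hη hl (hb₁ _) (hb₂ _))

theorem hasDerivAt_integral_resolventTerm (hc : 0 < c) (hη : 0 ≤ η) (hz₁ : Measurable z₁)
    (hz₂ : Measurable z₂) (hb₁ : ∀ ω, ‖z₁ ω‖ ≤ 1) (hb₂ : ∀ ω, ‖z₂ ω‖ ≤ 1) (hl : l ∈ Icc 0 η) :
    HasDerivAt (fun l : ℝ => ∫ ω : ℝ, resolventTerm (c + ω * I) l (z₁ ω) (z₂ ω))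
      (∫ ω : ℝ, resolventTermDeriv (c + ω * I) l (z₁ ω) (z₂ ω)) l := by
  have hU : Ioo (-(c / 4)) (η + c) ∈ 𝓝 l :=
    Ioo_mem_nhds (by linarith [hl.1]) (by linarith [hl.2])
  have hdiff : ∀ ω : ℝ, ∀ l' ∈ Ioo (-(c / 4)) (η + c),
      HasDerivAt (fun l : ℝ => resolventTerm (c + ω * I) l (z₁ ω) (z₂ ω))
        (resolventTermDeriv (c + ω * I) l' (z₁ ω) (z₂ ω)) l' := fun ω l' hl' =>
    have hden := resolvent_denominators_ne_zero hc hη hl' (hb₂ ω)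
    hasDerivAt_resolventTerm hden.1 hden.2
  exact (hasDerivAt_integral_of_dominated_loc_of_deriv_le
    (F := fun (l ω : ℝ) => resolventTerm (c + ω * I) l (z₁ ω) (z₂ ω))
    (F' := fun (l ω : ℝ) => resolventTermDeriv (c + ω * I) l (z₁ ω) (z₂ ω)) hU
    (Eventually.of_forall fun l' => (measurable_resolventTerm hz₁ hz₂ c l').aestronglyMeasurable)
    (integrable_resolventTerm hc hη hz₁ hz₂ hb₁ hb₂ (mem_of_mem_nhds hU))
    (measurable_resolventTermDeriv hz₁ hz₂ c l).aestronglyMeasurable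
    (ae_of_all _ fun ω l' hl' => norm_resolventTermDeriv_le_uniform hc hη hl' (hb₁ ω) (hb₂ ω))
    ((integrable_inv_sq_add_sq hc.ne').const_mul _) (ae_of_all _ hdiff)).2

theorem continuousOn_integral_resolventTermDeriv (hc : 0 < c) (hη : 0 ≤ η)
    (hz₁ : Measurable z₁) (hz₂ : Measurable z₂) (hb₁ : ∀ ω, ‖z₁ ω‖ ≤ 1)
    (hb₂ : ∀ ω, ‖z₂ ω‖ ≤ 1) :
    ContinuousOn (fun l : ℝ => ∫ ω : ℝ, resolventTermDeriv (c + ω * I) l (z₁ ω) (z₂ ω))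
      (Icc 0 η) := by
  have hU : Icc 0 η ⊆ Ioo (-(c / 4)) (η + c) := Icc_subset_Ioo (by linarith) (by linarith)
  refine continuousOn_of_dominated
    (fun l _ => (measurable_resolventTermDeriv hz₁ hz₂ c l).aestronglyMeasurable)
    (fun l hl => ae_of_all _ fun ω =>
      norm_resolventTermDeriv_le_uniform hc hη (hU hl) (hb₁ ω) (hb₂ ω))
    ((integrable_inv_sq_add_sq hc.ne').const_mul _)
    (ae_of_all _ fun ω l hl => ContinuousAt.continuousWithinAt ?_)
  obtain ⟨he, hd⟩ := resolvent_denominators_ne_zero (ω := ω) hc hη (hU hl) (hb₂ ω)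
  unfold resolventTermDeriv
  fun_prop (disch := simp [he, hd])

theorem norm_integral_resolventTermDeriv_le (hc : 0 < c) (hη : 0 ≤ η) (hb₁ : ∀ ω, ‖z₁ ω‖ ≤ 1)
    (hb₂ : ∀ ω, ‖z₂ ω‖ ≤ 1) (hl : l ∈ Icc 0 η) :
    ‖∫ ω : ℝ, resolventTermDeriv (c + ω * I) l (z₁ ω) (z₂ ω)‖ ≤
      3 * (denomConst c η ^ 3 * c)⁻¹ * (π / c) := by
  rw [← integral_univ_inv_sq_add_sq hc, ← integral_const_mul]
  exact norm_integral_le_of_norm_le ((integrable_inv_sq_add_sq hc.ne').const_mul _)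
    (ae_of_all _ fun ω => norm_resolventTermDeriv_le_uniform hc hη
      (Icc_subset_Ioo (by linarith) (by linarith) hl) (hb₁ ω) (hb₂ ω))

theorem norm_integral_resolventTerm_sub_le {zt₁ zt₂ : ℝ → ℂ} {M W : ℝ} (hc : 0 < c)
    (hη : 0 ≤ η) (hz₁ : Measurable z₁) (hz₂ : Measurable z₂) (hzt₁ : Measurable zt₁)
    (hzt₂ : Measurable zt₂) (hb₁ : ∀ ω, ‖z₁ ω‖ ≤ 1) (hb₂ : ∀ ω, ‖z₂ ω‖ ≤ 1)
    (hbt₁ : ∀ ω, ‖zt₁ ω‖ ≤ 1) (hbt₂ : ∀ ω, ‖zt₂ ω‖ ≤ 1) (hW : 0 < W) (hM : 0 ≤ M)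
    (hwin : ∀ ω ∈ Icc (-W) W, ‖z₁ ω - zt₁ ω‖ ≤ M ∧ ‖z₂ ω - zt₂ ω‖ ≤ M) (hl : l ∈ Icc 0 η) :
    ‖(∫ ω : ℝ, resolventTerm (c + ω * I) l (z₁ ω) (z₂ ω)) -
        ∫ ω : ℝ, resolventTerm (c + ω * I) l (zt₁ ω) (zt₂ ω)‖ ≤
      ((denomConst c η ^ 2)⁻¹ + η * (denomConst c η ^ 3 * c)⁻¹) * (2 * π / c + 8 * π) *
        (M + 1 / W) := by
  set K := (denomConst c η ^ 2)⁻¹ + η * (denomConst c η ^ 3 * c)⁻¹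
  have hK : 0 ≤ K := by have := denomConst_pos hc hη; positivity
  have hl' : l ∈ Ioo (-(c / 4)) (η + c) := Icc_subset_Ioo (by linarith) (by linarith) hl
  have hpt : ∀ ω : ℝ, ‖resolventTerm (c + ω * I) l (z₁ ω) (z₂ ω) -
      resolventTerm (c + ω * I) l (zt₁ ω) (zt₂ ω)‖ ≤
        K * (2 * M * (c ^ 2 + ω ^ 2)⁻¹ + 8 * (W ^ 2 + ω ^ 2)⁻¹) := fun ω =>
    (norm_resolventTerm_sub_le_uniform hc hη hl (hbt₁ ω) (hb₂ ω) (hbt₂ ω)).trans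
      (mul_le_mul_of_nonneg_left (add_mul_inv_sq_add_sq_le hW hM
        ((norm_sub_le_of_le (hb₁ ω) (hbt₁ ω)).trans_eq one_add_one_eq_two)
        ((norm_sub_le_of_le (hb₂ ω) (hbt₂ ω)).trans_eq one_add_one_eq_two) (hwin ω)) hK)
  have hint : Integrable fun ω : ℝ => K * (2 * M * (c ^ 2 + ω ^ 2)⁻¹ + 8 * (W ^ 2 + ω ^ 2)⁻¹) :=
    (((integrable_inv_sq_add_sq hc.ne').const_mul _).add
      ((integrable_inv_sq_add_sq hW.ne').const_mul _)).const_mul K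
  have hsplit : (2 * π / c + 8 * π) * (M + 1 / W) =
      2 * M * (π / c) + 8 * (π / W) + (2 * π / c * (1 / W) + 8 * π * M) := by ring
  have hrest : 0 ≤ 2 * π / c * (1 / W) + 8 * π * M := by positivity
  rw [← integral_sub (integrable_resolventTerm hc hη hz₁ hz₂ hb₁ hb₂ hl')
    (integrable_resolventTerm hc hη hzt₁ hzt₂ hbt₁ hbt₂ hl')]
  refine (norm_integral_le_of_norm_le hint (ae_of_all _ hpt)).trans ?_
  rw [integral_const_mul, integral_add ((integrable_inv_sq_add_sq hc.ne').const_mul _)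
    ((integrable_inv_sq_add_sq hW.ne').const_mul _), integral_const_mul, integral_const_mul,
    integral_univ_inv_sq_add_sq hc, integral_univ_inv_sq_add_sq hW, mul_assoc K, hsplit]
  exact mul_le_mul_of_nonneg_left (le_add_of_nonneg_right hrest) hK

end Integral

/-- Uniform differentiability bound for the resolvent-type integral
`Ψ_z(λ̃,ω) = z₁(ω)/[(c+iω+λ̃)(c+iω+λ̃−λ̃z₂(ω))]`:
(i) `λ̃ ↦ ∫ Ψ_z(λ̃,ω)dω` is continuously differentiable on `[0,η₀]` with derivative
bounded by a constant depending only on `c`, `η₀`; (ii) a uniform stability estimate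
in terms of `sup_{|ω|≤W}|zᵢ−z̃ᵢ|` and `1/W`. -/
theorem resolvent_integral_uniform_bounds (c η₀ : ℝ) (hc : 0 < c) (hη₀ : 0 < η₀) :
    ∃ C K : ℝ, 0 < K ∧
      (∀ z₁ z₂ : ℝ → ℂ, Measurable z₁ → Measurable z₂ →
        (∀ ω, ‖z₁ ω‖ ≤ 1) → (∀ ω, ‖z₂ ω‖ ≤ 1) →
        ∃ D : ℝ → ℂ, ContinuousOn D (Set.Icc 0 η₀) ∧
          (∀ l ∈ Set.Icc 0 η₀,
            HasDerivWithinAt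
              (fun l' : ℝ => ∫ ω : ℝ,
                z₁ ω / ((c + ω * I + l') * (c + ω * I + l' - l' * z₂ ω)))
              (D l) (Set.Icc 0 η₀) l) ∧
          (∀ l ∈ Set.Icc 0 η₀, ‖D l‖ ≤ C)) ∧
      (∀ z₁ z₂ zt₁ zt₂ : ℝ → ℂ, Measurable z₁ → Measurable z₂ →
        Measurable zt₁ → Measurable zt₂ →
        (∀ ω, ‖z₁ ω‖ ≤ 1) → (∀ ω, ‖z₂ ω‖ ≤ 1) →
        (∀ ω, ‖zt₁ ω‖ ≤ 1) → (∀ ω, ‖zt₂ ω‖ ≤ 1) →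
        ∀ W : ℝ, 1 ≤ W → ∀ l ∈ Set.Icc 0 η₀,
          ‖(∫ ω : ℝ, z₁ ω / ((c + ω * I + l) * (c + ω * I + l - l * z₂ ω))) -
              ∫ ω : ℝ, zt₁ ω / ((c + ω * I + l) * (c + ω * I + l - l * zt₂ ω))‖
            ≤ K * (max (⨆ ω : Set.Icc (-W) W, ‖z₁ ω - zt₁ ω‖)
                     (⨆ ω : Set.Icc (-W) W, ‖z₂ ω - zt₂ ω‖) + 1 / W)) := by
  have hη := hη₀.le
  have hm := denomConst_pos hc hη
  refine ⟨3 * (denomConst c η₀ ^ 3 * c)⁻¹ * (π / c),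
    ((denomConst c η₀ ^ 2)⁻¹ + η₀ * (denomConst c η₀ ^ 3 * c)⁻¹) * (2 * π / c + 8 * π),
    by positivity, ?_, ?_⟩
  · intro z₁ z₂ hz₁ hz₂ hb₁ hb₂
    exact ⟨_, continuousOn_integral_resolventTermDeriv hc hη hz₁ hz₂ hb₁ hb₂,
      fun l hl => (hasDerivAt_integral_resolventTerm hc hη hz₁ hz₂ hb₁ hb₂ hl).hasDerivWithinAt,
      fun l hl => norm_integral_resolventTermDeriv_le hc hη hb₁ hb₂ hl⟩
  · intro z₁ z₂ zt₁ zt₂ hz₁ hz₂ hzt₁ hzt₂ hb₁ hb₂ hbt₁ hbt₂ W hW l hl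
    exact norm_integral_resolventTerm_sub_le hc hη hz₁ hz₂ hzt₁ hzt₂ hb₁ hb₂ hbt₁ hbt₂
      (by linarith) (le_max_of_le_left (Real.iSup_nonneg fun _ => norm_nonneg _))
      (fun ω hω => ⟨(norm_sub_le_iSup hb₁ hbt₁ hω).trans (le_max_left _ _),
        (norm_sub_le_iSup hb₂ hbt₂ hω).trans (le_max_right _ _)⟩) hl
end
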